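/- arXiv:0803.0270 — 7 statements merged into one kernel-verified Lean document; each statement's English description precedes it below -/
import Mathlib

section
/- If a positive natural number N is autobiographical with base-10 digits d_0 d_1 … d_{k-1} (most-significant-first), then the sum d_1 + d_2 + … + d_{k-1} of all digits except the first equals 1 plus the number of indices i with 1 ≤ i ≤ k-1 such that d_i ≠ 0. -/
/-!
Summing the self-description `dᵢ = #{j | dⱼ = i}` over `i < k` shows that the digit sum is the
number of digits `k`, provided every digit is `< k`; and it is, since a digit `dᵢ ≥ k` would force
all `k` digits to equal `i`, including `dᵢ` itself. The leading digit `d₀ ≠ 0` counts the zeros,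
which all lie in the tail, so the tail sums to `k - d₀ = 1 + #{nonzero digits of the tail}`.
-/

/-- The base-10 digits of `N`, written most-significant-first. -/
def msdDigits (N : ℕ) : List ℕ := (Nat.digits 10 N).reverse

/-- A positive natural number `N` is autobiographical if, writing its base-10 digits
most-significant-first as `d_0 d_1 … d_{k-1}`, for every `i < k` the digit `d_i` equals
the number of occurrences of the digit `i` in the base-10 representation of `N`. -/
def Autobiographical (N : ℕ) : Prop :=
  ∀ i < (msdDigits N).length, (msdDigits N).getD i 0 = (msdDigits N).count i

theorem List.countP_ne_add_count {α : Type*} [DecidableEq α] (a : α) (l : List α) :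
    l.countP (· ≠ a) + l.count a = l.length := by
  rw [List.count_eq_countP, List.length_eq_countP_add_countP (· ≠ a)]
  congr 1
  exact List.countP_congr (by simp)

def SelfDescribing (L : List ℕ) : Prop :=
  ∀ i < L.length, L.getD i 0 = L.count i

namespace SelfDescribing

variable {L : List ℕ}

theorem getElem_eq_count (hL : SelfDescribing L) {i : ℕ} (hi : i < L.length) :
    L[i] = L.count i := by
  rw [← List.getD_eq_getElem L 0 hi, hL i hi]

theorem lt_length_of_mem (hL : SelfDescribing L) {x : ℕ} (hx : x ∈ L) : x < L.length := by
  obtain ⟨i, hi, rfl⟩ := List.getElem_of_mem hx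
  by_contra! hle
  have hcount : L.count i = L.length :=
    le_antisymm List.count_le_length (hL.getElem_eq_count hi ▸ hle)
  have : i = L[i] := List.count_eq_length.mp hcount _ (List.getElem_mem hi)
  omega

theorem sum_eq_length (hL : SelfDescribing L) : L.sum = L.length := by
  calc L.sum = ∑ i : Fin L.length, L[i] := (Fin.sum_univ_getElem L).symm
    _ = ∑ i ∈ Finset.range L.length, L.count i := by
      rw [Finset.sum_range]
      exact Finset.sum_congr rfl fun i _ => hL.getElem_eq_count i.isLt
    _ = L.length := by
      simpa using Multiset.sum_count_eq_card (s := Finset.range L.length) (m := (L : Multiset ℕ))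
        fun x hx => Finset.mem_range.mpr (hL.lt_length_of_mem hx)

theorem tail_sum_of_cons {a : ℕ} {t : List ℕ} (hL : SelfDescribing (a :: t)) (ha : a ≠ 0) :
    t.sum = 1 + t.countP (· ≠ 0) := by
  have hsum : a + t.sum = t.length + 1 := by simpa using hL.sum_eq_length
  have hzeros : a = t.count 0 := by simpa [List.count_cons, ha] using hL 0 (by simp)
  have := t.countP_ne_add_count 0
  omega

end SelfDescribing

theorem msdDigits_eq_cons_of_pos {N : ℕ} (hN : 0 < N) :
    ∃ a t, msdDigits N = a :: t ∧ a ≠ 0 := by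
  have hd : Nat.digits 10 N ≠ [] := Nat.digits_ne_nil_iff_ne_zero.mpr hN.ne'
  have hne : msdDigits N ≠ [] := List.reverse_ne_nil_iff.mpr hd
  obtain ⟨a, t, hat⟩ := List.exists_cons_of_ne_nil hne
  refine ⟨a, t, hat, ?_⟩
  have hhead : (msdDigits N).head hne = (Nat.digits 10 N).getLast hd := List.head_reverse hne
  simp only [hat, List.head_cons] at hhead
  exact hhead ▸ Nat.getLast_digit_ne_zero 10 hN.ne'

theorem autobiographical_tail_sum (N : ℕ) (hN : 0 < N)
    (hA : Autobiographical N) :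
    (msdDigits N).tail.sum = 1 + (msdDigits N).tail.countP (fun d => d ≠ 0) := by
  obtain ⟨a, t, hat, ha⟩ := msdDigits_eq_cons_of_pos hN
  have hL : SelfDescribing (a :: t) := hat ▸ hA
  rw [hat]
  exact hL.tail_sum_of_cons ha
end

section
/- If a positive natural number N is autobiographical, then the number of occurrences of the digit 1 in the base-10 representation of N is 0, 1, or 2. -/
open Finset

theorem List.count_eq_card_filter_range {α : Type*} [DecidableEq α] (l : List α) (d a : α) :
    l.count a = #{i ∈ Finset.range l.length | l.getD i d = a} := by
  induction l with
  | nil => simp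
  | cons x t ih =>
    rw [List.length_cons, card_filter, Finset.sum_range_succ', ← card_filter]
    simp only [getD_cons_succ, getD_cons_zero, ← ih, count_cons, beq_iff_eq]

/-- `f i` is the letter in position `i < k` of a word over `ℕ`, and every letter `v` occurs
exactly `f v` times in that word. -/
def IsSelfDescribing (k : ℕ) (f : ℕ → ℕ) : Prop :=
  ∀ v, f v = #{i ∈ range k | f i = v}

namespace IsSelfDescribing

variable {k : ℕ} {f : ℕ → ℕ}

theorem le (hf : IsSelfDescribing k f) (v : ℕ) : f v ≤ k :=
  (hf v).trans_le <| (card_filter_le _ _).trans (card_range k).le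

theorem sum_le (hf : IsSelfDescribing k f) : ∑ i ∈ range k, f i ≤ k :=
  calc ∑ i ∈ range k, f i = ∑ i ∈ range k, #{j ∈ range k | f j = i} :=
        sum_congr rfl fun i _ => hf i
    _ = #{j ∈ range k | f j ∈ range k} := sum_card_fiberwise_eq_card_filter _ _ _
    _ ≤ k := (card_filter_le _ _).trans (card_range k).le

theorem sum_tsub_one_le (hf : IsSelfDescribing k f) : ∑ i ∈ range k, (f i - 1) ≤ f 0 := by
  have hsplit :
      ∑ i ∈ range k, f i = ∑ i ∈ range k, (f i - 1) + #{i ∈ range k | f i ≠ 0} := by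
    rw [card_filter, ← sum_add_distrib]
    exact sum_congr rfl fun i _ => by split_ifs <;> omega
  have hzero : #{i ∈ range k | f i = 0} + #{i ∈ range k | f i ≠ 0} = k := by
    rw [card_filter_add_card_filter_not, card_range]
  have hsum := hf.sum_le
  rw [← hf 0] at hzero
  omega

theorem le_two (hf : IsSelfDescribing k f) : f 1 ≤ 2 := by
  by_contra! h
  have hk : 1 < k := by have := hf.le 1; omega
  have hpair : (f 0 - 1) + (f 1 - 1) ≤ ∑ i ∈ range k, (f i - 1) := by
    rw [← sum_pair (f := fun i => f i - 1) zero_ne_one]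
    exact sum_le_sum_of_subset <| by
      simp only [insert_subset_iff, mem_range, singleton_subset_iff]; omega
  have hbound := hf.sum_tsub_one_le
  omega

end IsSelfDescribing

theorem Autobiographical.isSelfDescribing {N : ℕ} (hA : Autobiographical N) :
    IsSelfDescribing (msdDigits N).length ((msdDigits N).count ·) := fun v => by
  dsimp only
  rw [List.count_eq_card_filter_range _ 0]
  exact congrArg card <| filter_congr fun i hi => by rw [hA i (mem_range.1 hi)]

theorem autobiographical_count_one_general (N : ℕ)
    (hA : Autobiographical N) :
    (Nat.digits 10 N).count 1 = 0 ∨ (Nat.digits 10 N).count 1 = 1 ∨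
      (Nat.digits 10 N).count 1 = 2 := by
  have hle := hA.isSelfDescribing.le_two
  rw [msdDigits, List.count_reverse] at hle
  omega

theorem autobiographical_count_one (N : ℕ) (hN : 0 < N)
    (hA : Autobiographical N) :
    (Nat.digits 10 N).count 1 = 0 ∨ (Nat.digits 10 N).count 1 = 1 ∨
      (Nat.digits 10 N).count 1 = 2 :=
  autobiographical_count_one_general N hA
end

section
/- If a positive natural number N is autobiographical and the digit 1 does not occur in the base-10 representation of N, then N = 2020. -/
namespace List

theorem sum_count_le_length {α : Type*} [DecidableEq α] (s : Finset α) (l : List α) :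
    ∑ i ∈ s, l.count i ≤ l.length :=
  calc ∑ i ∈ s, l.count i ≤ ∑ i ∈ s ∪ l.toFinset, l.count i :=
        Finset.sum_le_sum_of_subset Finset.subset_union_left
    _ = ∑ i ∈ l.toFinset, l.count i :=
        (Finset.sum_subset Finset.subset_union_right
          fun _ _ hi ↦ count_eq_zero.mpr (by simpa using hi)).symm
    _ = l.length := sum_toFinset_count_eq_length l

theorem sum_eq_sum_range_getD {M : Type*} [AddCommMonoid M] (l : List M) :
    l.sum = ∑ i ∈ Finset.range l.length, l.getD i 0 := by
  rw [Finset.sum_range, ← Fin.sum_univ_getElem]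
  simp

/-- Entrywise, `2 + d * [x = d] ≤ x + 2 * [x = 0] + 2 * [x = d]` holds for every `x ≠ 1`. -/
theorem two_mul_length_add_mul_count_le {l : List ℕ} (h1 : 1 ∉ l) (d : ℕ) :
    2 * l.length + d * l.count d ≤ l.sum + 2 * l.count 0 + 2 * l.count d := by
  induction l with
  | nil => simp
  | cons x l ih =>
    simp only [mem_cons, not_or] at h1
    have := ih h1.2
    simp only [count_cons, length_cons, sum_cons, beq_iff_eq]
    split_ifs <;> grind

def SelfDescribing (l : List ℕ) : Prop :=
  ∀ i < l.length, l.getD i 0 = l.count i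

namespace SelfDescribing

theorem count_mem {l : List ℕ} (hl : SelfDescribing l) {i : ℕ} (hi : i < l.length) :
    l.count i ∈ l := by
  rw [← hl i hi, getD_eq_getElem _ _ hi]
  exact getElem_mem hi

theorem sum_le_length {l : List ℕ} (hl : SelfDescribing l) : l.sum ≤ l.length := by
  rw [sum_eq_sum_range_getD, Finset.sum_congr rfl fun i hi ↦ hl i (Finset.mem_range.mp hi)]
  exact sum_count_le_length _ l

theorem two_le_count {l : List ℕ} (hl : SelfDescribing l) (h1 : 1 ∉ l) {i : ℕ}
    (hi : i < l.length) (hpos : 0 < l.count i) : 2 ≤ l.count i := by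
  have hmem := hl.count_mem hi
  have : l.count i ≠ 1 := fun h ↦ h1 (h ▸ hmem)
  omega

theorem count_zero_eq_two {l : List ℕ} (hl : SelfDescribing l) (hne : l ≠ []) (h1 : 1 ∉ l) :
    l.count 0 = 2 ∧ l.count 2 = 2 ∧ l.length = 4 := by
  obtain ⟨d, hd⟩ : ∃ d, l.count 0 = d := ⟨_, rfl⟩
  have hd_mem : d ∈ l := hd ▸ hl.count_mem (length_pos_iff.mpr hne)
  have hd0 : d ≠ 0 := by
    rintro rfl
    exact count_eq_zero.mp hd hd_mem
  have hd1 : d ≠ 1 := fun h ↦ h1 (h ▸ hd_mem)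
  have hcount_d : d + l.count d ≤ l.length := by
    simpa [Finset.sum_pair (Ne.symm hd0), hd] using sum_count_le_length {0, d} l
  have hcd_pos : 0 < l.count d := count_pos_iff.mpr hd_mem
  have hcd2 : 2 ≤ l.count d := hl.two_le_count h1 (by omega) hcd_pos
  have hsum := hl.sum_le_length
  have hineq := hd ▸ two_mul_length_add_mul_count_le h1 d
  have hd2 : d = 2 := by
    have : d ≤ 2 := by nlinarith
    omega
  subst hd2
  omega

theorem eq_of_one_notMem {l : List ℕ} (hl : SelfDescribing l) (hne : l ≠ []) (h1 : 1 ∉ l) :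
    l = [2, 0, 2, 0] := by
  obtain ⟨hc0, hc2, hk⟩ := hl.count_zero_eq_two hne h1
  have hc1 : l.count 1 = 0 := count_eq_zero.mpr h1
  have hc3 : l.count 3 = 0 := by
    have := sum_count_le_length {0, 2, 3} l
    rw [Finset.sum_insert (by decide), Finset.sum_pair (by decide)] at this
    omega
  obtain ⟨a, b, c, e, rfl⟩ : ∃ a b c e, l = [a, b, c, e] := by
    match l, hk with | [a, b, c, e], _ => exact ⟨a, b, c, e, rfl⟩
  have ha : a = 2 := (hl 0 (by simp)).trans hc0
  have hb : b = 0 := (hl 1 (by simp)).trans hc1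
  have hc : c = 2 := (hl 2 (by simp)).trans hc2
  have he : e = 0 := (hl 3 (by simp)).trans hc3
  rw [ha, hb, hc, he]

end SelfDescribing

end List

theorem autobiographical_iff {N : ℕ} : Autobiographical N ↔ (msdDigits N).SelfDescribing :=
  Iff.rfl

theorem msdDigits_ne_nil {N : ℕ} (hN : N ≠ 0) : msdDigits N ≠ [] := by
  simpa [msdDigits] using Nat.digits_ne_nil_iff_ne_zero.mpr hN

theorem ofDigits_reverse_msdDigits (N : ℕ) : Nat.ofDigits 10 (msdDigits N).reverse = N := by
  rw [msdDigits, List.reverse_reverse, Nat.ofDigits_digits]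

theorem autobiographical_no_ones (N : ℕ) (hN : 0 < N)
    (hA : Autobiographical N) (h1 : 1 ∉ Nat.digits 10 N) :
    N = 2020 := by
  have hmsd : msdDigits N = [2, 0, 2, 0] :=
    (autobiographical_iff.mp hA).eq_of_one_notMem (msdDigits_ne_nil hN.ne')
      (by simpa [msdDigits] using h1)
  simpa [hmsd, Nat.ofDigits] using (ofDigits_reverse_msdDigits N).symm
end

section
/- Let N be a positive natural number and let L be its base-10 digit string. Then L fails to admit an infinite sequence of CVs if and only if at least one of the following holds: (1) some digit is repeated more than 9 times in N; (2) there is some x ≥ 1 such that each of the ten digits 0, 1, …, 9 occurs exactly x times in N; (3) the digit 9 occurs at least once in N and the ten multiplicities with which the digits 0, 1, …, 9 occur in N are precisely the numbers 0, 1, …, 9 in some order. -/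
/-- A digit string is a nonempty finite list of natural numbers, each at most 9,
read most-significant-first. -/
def DigitString (L : List ℕ) : Prop := L ≠ [] ∧ ∀ d ∈ L, d ≤ 9

/-- The curriculum vitae of `L`: the digit string of length `m + 1`, where `m` is the
largest entry of `L`, whose `i`-th entry (0-indexed) counts the occurrences of `i` in `L`. -/
def CV (L : List ℕ) : List ℕ :=
  (List.range (L.foldr max 0 + 1)).map (fun i => L.count i)

/-- The sequence of CVs of `L`: `CVseq L 0 = L` and `CVseq L (n+1) = CV (CVseq L n)`. -/
def CVseq (L : List ℕ) : ℕ → List ℕ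
  | 0 => L
  | n + 1 => CV (CVseq L n)

/-- `L` admits an infinite sequence of CVs: for every `n`, each value occurs at most
9 times in `CVseq L n` (so the next CV is defined). -/
def AdmitsCVs (L : List ℕ) : Prop := ∀ n, ∀ d, (CVseq L n).count d ≤ 9

/-- The complete life story of `L`: the digit string of length 10 whose `i`-th entry
(0-indexed, `0 ≤ i ≤ 9`) counts the occurrences of `i` in `L`. -/
def CLS (L : List ℕ) : List ℕ := (List.range 10).map (fun i => L.count i)

/-- The sequence of life stories of `L`. -/
def CLSseq (L : List ℕ) : ℕ → List ℕ
  | 0 => L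
  | n + 1 => CLS (CLSseq L n)

/-- `L` admits an infinite sequence of life stories: for every `n`, each value occurs
at most 9 times in `CLSseq L n`. -/
def AdmitsCLSs (L : List ℕ) : Prop := ∀ n, ∀ d, (CLSseq L n).count d ≤ 9

/-- The height of a digit string: the maximum of (its largest entry plus 1) and its length. -/
def height (L : List ℕ) : ℕ := max (L.foldr max 0 + 1) L.length

/-! A string with entries at most 9 in which no value occurs 10 times has a CV of length at most 10
with entries at most 9, and the entries of `CV M` always sum to the length of `M`.
The CV of a string `M` of length at most 10 can only have a value occurring 10 times by being
constant of length 10, i.e. when every digit occurs in `M` equally often, `x ≥ 1` times; as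
`M` has at most 10 entries, `x = 1` and `M` is a permutation of `0, …, 9`. A CV of a string of
length at most 10 is never such a permutation, since its entries sum to at most `10 < 45`.
So the sequence of CVs can only break down at its first three terms, which gives the conditions
(1), (2) and (3) in turn. -/

namespace List

theorem foldr_max_eq_of_mem {l : List ℕ} {b : ℕ} (hb : b ∈ l) (h : ∀ a ∈ l, a ≤ b) :
    l.foldr max 0 = b :=
  le_antisymm (max_le_of_forall_le l b h) (le_max_of_le hb le_rfl)

theorem foldr_max_mem {l : List ℕ} (h : 0 < l.foldr max 0) : l.foldr max 0 ∈ l := by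
  have hl : l ≠ [] := by rintro rfl; simp at h
  exact maximum_mem (foldr_max_of_ne_nil hl).symm

theorem sum_map_count_range {l : List ℕ} {n : ℕ} (h : ∀ a ∈ l, a < n) :
    ((range n).map l.count).sum = l.length := by
  have := Multiset.sum_count_eq_card (s := Finset.range n) (m := (l : Multiset ℕ)) (by simpa using h)
  simp only [Multiset.coe_count, Multiset.coe_card] at this
  exact this

end List

theorem length_CV (M : List ℕ) : (CV M).length = M.foldr max 0 + 1 := by
  simp [CV]

theorem mem_CV {M : List ℕ} {a : ℕ} : a ∈ CV M ↔ ∃ i ≤ M.foldr max 0, M.count i = a := by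
  simp [CV]

theorem CV_eq_CLS {M : List ℕ} (h : M.foldr max 0 = 9) : CV M = CLS M := by
  rw [CV, h]
  rfl

theorem sum_CV (M : List ℕ) : (CV M).sum = M.length :=
  List.sum_map_count_range fun _ ha => Nat.lt_succ_of_le (List.le_max_of_le ha le_rfl)

theorem length_CV_le {M : List ℕ} {b : ℕ} (hM : ∀ a ∈ M, a ≤ b) : (CV M).length ≤ b + 1 := by
  rw [length_CV]
  exact Nat.succ_le_succ (List.max_le_of_forall_le M b hM)

theorem le_of_mem_CV {M : List ℕ} {b : ℕ} (hM : ∀ d, M.count d ≤ b) : ∀ a ∈ CV M, a ≤ b := by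
  intro a ha
  obtain ⟨i, -, rfl⟩ := mem_CV.mp ha
  exact hM i

theorem exists_nine_lt_count_CV_iff {M : List ℕ} (hM : ∀ a ∈ M, a ≤ 9) :
    (∃ d, 9 < (CV M).count d) ↔ ∃ x, 1 ≤ x ∧ ∀ i < 10, M.count i = x := by
  constructor
  · rintro ⟨d, hd⟩
    have hlen := length_CV_le hM
    have hcount : (CV M).count d = (CV M).length := by
      have := List.count_le_length (a := d) (l := CV M)
      omega
    have hmax : M.foldr max 0 = 9 := by
      rw [length_CV] at hlen hcount
      omega
    have hconst : ∀ i < 10, M.count i = d := fun i hi =>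
      (List.count_eq_length.mp hcount _ (mem_CV.mpr ⟨i, by omega, rfl⟩)).symm
    refine ⟨d, ?_, hconst⟩
    rw [← hconst 9 (by norm_num)]
    exact List.count_pos_iff.mpr (hmax ▸ List.foldr_max_mem (by omega))
  · rintro ⟨x, hx, hconst⟩
    have h9 : 9 ∈ M := List.count_pos_iff.mp (by rw [hconst 9 (by norm_num)]; omega)
    refine ⟨x, ?_⟩
    rw [CV_eq_CLS (List.foldr_max_eq_of_mem h9 hM)]
    have hrep : CLS M = List.replicate 10 x :=
      List.eq_replicate_iff.mpr ⟨by simp [CLS], by simpa [CLS] using hconst⟩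
    rw [hrep, List.count_replicate_self]
    norm_num

theorem exists_const_count_iff_perm_range {M : List ℕ} (hM : ∀ a ∈ M, a ≤ 9)
    (hlen : M.length ≤ 10) :
    (∃ x, 1 ≤ x ∧ ∀ i < 10, M.count i = x) ↔ M.Perm (List.range 10) := by
  constructor
  · rintro ⟨x, hx, hconst⟩
    have hsum : ((List.range 10).map M.count).sum = M.length :=
      List.sum_map_count_range fun a ha => Nat.lt_succ_of_le (hM a ha)
    have hrep : (List.range 10).map M.count = List.replicate 10 x :=
      List.eq_replicate_iff.mpr ⟨by simp, by simpa using hconst⟩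
    have hx1 : x = 1 := by
      rw [hrep, List.sum_replicate, smul_eq_mul] at hsum
      omega
    subst hx1
    refine List.perm_iff_count.mpr fun a => ?_
    rw [List.count_range]
    split_ifs with ha
    · exact hconst a ha
    · exact List.count_eq_zero.mpr fun h => ha (Nat.lt_succ_of_le (hM a h))
  · intro h
    exact ⟨1, le_rfl, fun i hi => by rw [h.count_eq, List.count_range, if_pos hi]⟩

theorem exists_nine_lt_count_CV_iff_perm_range {M : List ℕ} (hM : ∀ a ∈ M, a ≤ 9)
    (hlen : M.length ≤ 10) : (∃ d, 9 < (CV M).count d) ↔ M.Perm (List.range 10) :=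
  (exists_nine_lt_count_CV_iff hM).trans (exists_const_count_iff_perm_range hM hlen)

theorem perm_range_CV_iff {M : List ℕ} (hM : ∀ a ∈ M, a ≤ 9) :
    (CV M).Perm (List.range 10) ↔ 9 ∈ M ∧ (CLS M).Perm (List.range 10) := by
  constructor
  · intro h
    have hmax : M.foldr max 0 = 9 := by
      simpa [length_CV] using h.length_eq
    exact ⟨hmax ▸ List.foldr_max_mem (by omega), CV_eq_CLS hmax ▸ h⟩
  · rintro ⟨h9, h⟩
    rwa [CV_eq_CLS (List.foldr_max_eq_of_mem h9 hM)]

theorem not_perm_range_CV {M : List ℕ} (hlen : M.length ≤ 10) : ¬ (CV M).Perm (List.range 10) := by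
  intro h
  have hsum := h.sum_eq
  have : (List.range 10).sum = 45 := by decide
  rw [sum_CV] at hsum
  omega

theorem CVseq_CV (L : List ℕ) (n : ℕ) : CVseq (CV L) n = CVseq L (n + 1) := by
  induction n with
  | zero => rfl
  | succ n ih => exact congrArg CV ih

theorem admitsCVs_iff_CV {L : List ℕ} :
    AdmitsCVs L ↔ (∀ d, L.count d ≤ 9) ∧ AdmitsCVs (CV L) := by
  simp only [AdmitsCVs, CVseq_CV]
  constructor
  · intro h
    exact ⟨h 0, fun n => h (n + 1)⟩
  · rintro ⟨h0, h⟩ (_ | n)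
    exacts [h0, h n]

theorem admitsCVs_of_length_le_ten {P : List ℕ} (hP : ∀ a ∈ P, a ≤ 9) (hlen : P.length ≤ 10)
    (hcount : ∀ d, P.count d ≤ 9) (hperm : ¬ P.Perm (List.range 10)) : AdmitsCVs P := by
  intro n
  induction n generalizing P with
  | zero => exact hcount
  | succ n ih =>
    rw [← CVseq_CV]
    refine ih (le_of_mem_CV hcount) (length_CV_le hP) ?_ (not_perm_range_CV hlen)
    simpa using mt (exists_nine_lt_count_CV_iff_perm_range hP hlen).mp hperm

theorem not_admitsCVs_iff_of_le_nine {L : List ℕ} (hL : ∀ a ∈ L, a ≤ 9) :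
    ¬ AdmitsCVs L ↔
      (∃ d, 9 < L.count d) ∨ (∃ d, 9 < (CV L).count d) ∨ ∃ d, 9 < (CV (CV L)).count d := by
  suffices AdmitsCVs L ↔ (∀ d, L.count d ≤ 9) ∧ (∀ d, (CV L).count d ≤ 9) ∧
      ∀ d, (CV (CV L)).count d ≤ 9 by
    simp only [this, not_and_or, not_forall, not_le]
  rw [admitsCVs_iff_CV, admitsCVs_iff_CV (L := CV L)]
  refine and_congr_right fun h0 => and_congr_right fun h1 => ⟨fun h => h 0, fun h2 => ?_⟩
  exact admitsCVs_of_length_le_ten (le_of_mem_CV h1) (length_CV_le (le_of_mem_CV h0))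
    h2 (not_perm_range_CV (length_CV_le hL))

theorem exists_nine_lt_count_CV_CV_iff {L : List ℕ} (hL : ∀ a ∈ L, a ≤ 9)
    (hcount : ∀ d, L.count d ≤ 9) :
    (∃ d, 9 < (CV (CV L)).count d) ↔ 9 ∈ L ∧ (CLS L).Perm (List.range 10) :=
  (exists_nine_lt_count_CV_iff_perm_range (le_of_mem_CV hcount) (length_CV_le hL)).trans
    (perm_range_CV_iff hL)

theorem not_admitsCVs_iff_general (N : ℕ) (L : List ℕ)
    (hL : L = (Nat.digits 10 N).reverse) :
    ¬ AdmitsCVs L ↔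
      (∃ d, 9 < L.count d) ∨
        (∃ x, 1 ≤ x ∧ ∀ d < 10, L.count d = x) ∨
          (9 ∈ L ∧
            ((List.range 10).map (fun i => L.count i)).Perm (List.range 10)) := by
  have hL9 : ∀ a ∈ L, a ≤ 9 := fun a ha => by
    rw [hL, List.mem_reverse] at ha
    exact Nat.le_of_lt_succ (Nat.digits_lt_base (by norm_num) ha)
  rw [not_admitsCVs_iff_of_le_nine hL9, exists_nine_lt_count_CV_iff hL9]
  by_cases h0 : ∃ d, 9 < L.count d
  · simp only [h0, true_or]
  · simp only [not_exists, not_lt] at h0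
    rw [exists_nine_lt_count_CV_CV_iff hL9 h0]
    rfl

theorem not_admitsCVs_iff (N : ℕ) (hN : 0 < N) (L : List ℕ)
    (hL : L = (Nat.digits 10 N).reverse) :
    ¬ AdmitsCVs L ↔
      (∃ d, 9 < L.count d) ∨
        (∃ x, 1 ≤ x ∧ ∀ d < 10, L.count d = x) ∨
          (9 ∈ L ∧
            ((List.range 10).map (fun i => L.count i)).Perm (List.range 10)) :=
  not_admitsCVs_iff_general N L hL
end

section
/- Let N be a positive natural number and let L be its base-10 digit string. Then L fails to admit an infinite sequence of life stories if and only if at least one of the following holds: (1) some digit is repeated more than 9 times in N; (2) there is some x ≥ 1 such that each of the ten digits 0, 1, …, 9 occurs exactly x times in N; (3) the ten multiplicities with which the digits 0, 1, …, 9 occur in N are precisely the numbers 0, 1, …, 9 in some order. -/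
lemma length_CLS (Q : List ℕ) : (CLS Q).length = 10 := by simp [CLS]

lemma mem_CLS {Q : List ℕ} {b : ℕ} : b ∈ CLS Q ↔ ∃ i < 10, Q.count i = b := by
  simp [CLS]

lemma sum_CLS {Q : List ℕ} (hQ : ∀ d ∈ Q, d < 10) : (CLS Q).sum = Q.length := by
  change ∑ i ∈ Finset.range 10, Q.count i = Q.length
  simpa using Multiset.sum_count_eq_card (s := Finset.range 10) (m := (Q : Multiset ℕ))
    (by simpa using hQ)

lemma CLS_eq_replicate_iff {Q : List ℕ} {c : ℕ} :
    CLS Q = List.replicate 10 c ↔ ∀ i < 10, Q.count i = c := by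
  rw [List.eq_replicate_iff]
  simp [length_CLS, mem_CLS]

lemma count_CLS_le_nine_iff {Q : List ℕ} {c : ℕ} :
    (CLS Q).count c ≤ 9 ↔ CLS Q ≠ List.replicate 10 c := by
  have hle : (CLS Q).count c ≤ 10 := length_CLS Q ▸ List.count_le_length
  have hall : (CLS Q).count c = 10 ↔ ∀ b ∈ CLS Q, b = c := by
    rw [← length_CLS Q, List.count_eq_length]
    exact forall₂_congr fun _ _ => eq_comm
  rw [ne_eq, List.eq_replicate_iff, ← hall, length_CLS]
  omega

lemma perm_range_iff_CLS_eq_replicate_one {Q : List ℕ} (hQ : ∀ d ∈ Q, d < 10) :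
    Q.Perm (List.range 10) ↔ CLS Q = List.replicate 10 1 := by
  rw [List.perm_iff_count, CLS_eq_replicate_iff]
  refine ⟨fun h i hi => by simp [h i, hi], fun h a => ?_⟩
  by_cases ha : a < 10
  · simp [h a ha, ha]
  · rw [List.count_eq_zero.mpr (fun haQ => ha (hQ a haQ)),
      List.count_eq_zero.mpr (by simpa using ha)]

lemma forall_count_CLS_le_nine_iff_not_perm {Q : List ℕ} (hlen : Q.length = 10)
    (hQ : ∀ d ∈ Q, d < 10) :
    (∀ c, (CLS Q).count c ≤ 9) ↔ ¬ Q.Perm (List.range 10) := by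
  simp only [count_CLS_le_nine_iff, perm_range_iff_CLS_eq_replicate_one hQ]
  refine ⟨fun h => h 1, fun h c hc => ?_⟩
  have : (CLS Q).sum = 10 * c := by rw [hc, List.sum_replicate, smul_eq_mul]
  rw [sum_CLS hQ, hlen] at this
  obtain rfl : c = 1 := by omega
  exact h hc

lemma forall_count_CLS_le_nine_iff {L : List ℕ} (hL : ∀ d ∈ L, d < 10) (hne : L ≠ []) :
    (∀ c, (CLS L).count c ≤ 9) ↔ ¬ ∃ x, 1 ≤ x ∧ ∀ d < 10, L.count d = x := by
  simp only [count_CLS_le_nine_iff, ne_eq, CLS_eq_replicate_iff]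
  refine ⟨fun h ⟨x, _, hx⟩ => h x hx, fun h c hc => ?_⟩
  obtain ⟨a, ha⟩ := List.exists_mem_of_ne_nil L hne
  exact h ⟨c, hc a (hL a ha) ▸ List.count_pos_iff.mpr ha, hc⟩

lemma CLSseq_succ' (L : List ℕ) (n : ℕ) : CLSseq L (n + 1) = CLSseq (CLS L) n := by
  induction n with
  | zero => rfl
  | succ n ih => exact congrArg CLS ih

lemma admitsCLSs_iff (L : List ℕ) :
    AdmitsCLSs L ↔ (∀ d, L.count d ≤ 9) ∧ AdmitsCLSs (CLS L) := by
  simp only [AdmitsCLSs, ← CLSseq_succ']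
  exact ⟨fun h => ⟨h 0, fun n => h (n + 1)⟩, fun h n => n.casesOn h.1 h.2⟩

structure IsStableStory (Q : List ℕ) : Prop where
  length_eq : Q.length = 10
  lt_ten : ∀ d ∈ Q, d < 10
  sum_eq : Q.sum = 10
  count_le : ∀ d, Q.count d ≤ 9

lemma forall_mem_CLS_lt_ten {Q : List ℕ} (h : ∀ d, Q.count d ≤ 9) :
    ∀ b ∈ CLS Q, b < 10 := by
  intro b hb
  obtain ⟨i, -, rfl⟩ := mem_CLS.mp hb
  exact Nat.lt_succ_of_le (h i)

lemma isStableStory_CLS {Q : List ℕ} (hlen : Q.length = 10) (hQ : ∀ d ∈ Q, d < 10)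
    (hcount : ∀ d, Q.count d ≤ 9) (hperm : ¬ Q.Perm (List.range 10)) :
    IsStableStory (CLS Q) where
  length_eq := length_CLS Q
  lt_ten := forall_mem_CLS_lt_ten hcount
  sum_eq := by rw [sum_CLS hQ, hlen]
  count_le := (forall_count_CLS_le_nine_iff_not_perm hlen hQ).mpr hperm

lemma IsStableStory.not_perm_range {Q : List ℕ} (h : IsStableStory Q) :
    ¬ Q.Perm (List.range 10) := fun hp => by
  have := hp.sum_eq
  rw [h.sum_eq] at this
  exact absurd this (by decide)

lemma IsStableStory.admitsCLSs {Q : List ℕ} (h : IsStableStory Q) : AdmitsCLSs Q := by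
  suffices ∀ n, IsStableStory (CLSseq Q n) from fun n => (this n).count_le
  intro n
  induction n with
  | zero => exact h
  | succ n ih => exact isStableStory_CLS ih.length_eq ih.lt_ten ih.count_le ih.not_perm_range

lemma admitsCLSs_CLS_iff {Q : List ℕ} (hlen : Q.length = 10) (hQ : ∀ d ∈ Q, d < 10)
    (hcount : ∀ d, Q.count d ≤ 9) :
    AdmitsCLSs (CLS Q) ↔ ¬ Q.Perm (List.range 10) := by
  refine ⟨fun h => (forall_count_CLS_le_nine_iff_not_perm hlen hQ).mp (h 0), fun h => ?_⟩
  exact (isStableStory_CLS hlen hQ hcount h).admitsCLSs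

theorem not_admitsCLSs_iff (N : ℕ) (hN : 0 < N) (L : List ℕ)
    (hL : L = (Nat.digits 10 N).reverse) :
    ¬ AdmitsCLSs L ↔
      (∃ d, 9 < L.count d) ∨
        (∃ x, 1 ≤ x ∧ ∀ d < 10, L.count d = x) ∨
          ((List.range 10).map (fun i => L.count i)).Perm (List.range 10) := by
  have hdigits : ∀ d ∈ L, d < 10 := fun d hd => by
    rw [hL, List.mem_reverse] at hd
    exact Nat.digits_lt_base (by norm_num) hd
  have hne : L ≠ [] := by simpa [hL, Nat.digits_ne_nil_iff_ne_zero] using hN.ne'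
  have hcount : (∃ d, 9 < L.count d) ↔ ¬ ∀ d, L.count d ≤ 9 := by
    simp only [not_forall, not_le]
  have hCLS :
      (∃ x, 1 ≤ x ∧ ∀ d < 10, L.count d = x) ↔ ¬ ∀ c, (CLS L).count c ≤ 9 := by
    rw [forall_count_CLS_le_nine_iff hdigits hne, not_not]
  have hCLSCLS (h0 : ∀ d, L.count d ≤ 9) (h1 : ∀ c, (CLS L).count c ≤ 9) :
      AdmitsCLSs (CLS (CLS L)) ↔ ¬ (CLS L).Perm (List.range 10) :=
    admitsCLSs_CLS_iff (length_CLS L) (forall_mem_CLS_lt_ten h0) h1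
  rw [admitsCLSs_iff, admitsCLSs_iff]
  change _ ↔ _ ∨ _ ∨ (CLS L).Perm _
  rw [hcount, hCLS]
  tauto
end

section
/- If (A, B) is a mutually-praising pair of positive natural numbers, then the digit 0 occurs in the base-10 representation of A and the digit 0 occurs in the base-10 representation of B. -/
/-- For positive natural numbers `M` and `N`, `M` is a biography of `N` if, writing the
base-10 digits of `M` most-significant-first as `m_0 … m_{k-1}`, one has
`k ≥ 1 + (the largest base-10 digit of N)`, and for every `i < k` the digit `m_i`
equals the number of occurrences of the digit `i` in the base-10 representation of `N`. -/
def IsBiography (M N : ℕ) : Prop :=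
  1 + (Nat.digits 10 N).foldr max 0 ≤ (msdDigits M).length ∧
    ∀ i < (msdDigits M).length, (msdDigits M).getD i 0 = (Nat.digits 10 N).count i

/-- A pair of distinct positive natural numbers `(A, B)` is mutually-praising if
`A` is a biography of `B` and `B` is a biography of `A`. -/
def MutuallyPraising (A B : ℕ) : Prop :=
  0 < A ∧ 0 < B ∧ A ≠ B ∧ IsBiography A B ∧ IsBiography B A

/-! The leading digit of a biography `M` of `N` counts the zeros of `N`, and a leading digit
is never `0`. -/

lemma msdDigits_getD_zero_ne_zero {M : ℕ} (hM : M ≠ 0) : (msdDigits M).getD 0 0 ≠ 0 := by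
  have hne : Nat.digits 10 M ≠ [] := Nat.digits_ne_nil_iff_ne_zero.mpr hM
  rw [msdDigits, List.getD_eq_getElem?_getD, ← List.head?_eq_getElem?, List.head?_reverse,
    List.getLast?_eq_some_getLast hne, Option.getD_some]
  exact Nat.getLast_digit_ne_zero 10 hM

lemma IsBiography.zero_mem_digits {M N : ℕ} (hM : M ≠ 0) (h : IsBiography M N) :
    0 ∈ Nat.digits 10 N := by
  have hlen : 0 < (msdDigits M).length := by
    simpa [msdDigits, List.length_pos_iff] using Nat.digits_ne_nil_iff_ne_zero.mpr hM
  rw [← List.count_pos_iff, ← h.2 0 hlen]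
  exact Nat.pos_of_ne_zero (msdDigits_getD_zero_ne_zero hM)

theorem mutuallyPraising_zero_mem (A B : ℕ) (h : MutuallyPraising A B) :
    0 ∈ Nat.digits 10 A ∧ 0 ∈ Nat.digits 10 B := by
  obtain ⟨hA, hB, -, hAB, hBA⟩ := h
  exact ⟨hBA.zero_mem_digits hB.ne', hAB.zero_mem_digits hA.ne'⟩
end

section
/- If (A, B) is a mutually-praising pair of positive natural numbers, then at least one of A and B ends in the digit 0, i.e., at least one of A and B is divisible by 10. -/
/-! If neither `A` nor `B` ends in `0`, both ends of each digit string are nonzero. The digits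
of `A` count the digits of `B`, so they sum to the number `l` of digits of `B`, and since the
last digit of `B` is nonzero, the digit `l - 1` occurs in `A`. A string with positive ends,
sum `l` and an entry `l - 1` has `l - 1` at one end, `1` at the other and zeros inside. So `1`
occurs in `A`, while the same argument for `B` shows that every digit of `A` is `0` or `l - 1`;
hence `l = 2`. Then the two digits of `B` count the digits `0` and `1` of `A`, which both occur,
so `0` does not occur in `B`, contradicting the leading digit of `A`. -/

open Finset

theorem end_eq_one_and_inner_eq_zero_of_sum_range_eq {f : ℕ → ℕ} {k m j : ℕ}
    (hsum : ∑ i ∈ range k, f i = m) (h0 : 0 < f 0) (hlast : 0 < f (k - 1))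
    (hj : j < k) (hfj : f j = m - 1) :
    (f 0 = 1 ∨ f (k - 1) = 1) ∧ ∀ i, 0 < i → i < k - 1 → f i = 0 := by
  obtain _ | _ | n := k
  · omega
  · obtain rfl : j = 0 := by omega
    simp only [zero_add, range_one, sum_singleton] at hsum
    omega
  rw [sum_range_succ', sum_range_succ] at hsum
  simp only [add_tsub_cancel_right] at hlast ⊢
  have hinner : ∀ i, 0 < i → i < n + 1 → f i ≤ ∑ i ∈ range n, f (i + 1) := fun i hi hin => by
    simpa [Nat.sub_add_cancel hi] using single_le_sum (f := fun i => f (i + 1))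
      (fun _ _ => Nat.zero_le _) (mem_range.2 (by omega : i - 1 < n))
  have hj_end : j = 0 ∨ j = n + 1 := by
    by_contra! hj'
    have := hinner j (by omega) (by omega)
    omega
  have hends : (f 0 = 1 ∨ f (n + 1) = 1) ∧ ∑ i ∈ range n, f (i + 1) = 0 := by
    rcases hj_end with rfl | rfl <;> omega
  refine ⟨hends.1, fun i hi hin => ?_⟩
  have := hinner i hi hin
  omega

open Nat

namespace IsBiography

variable {M N : ℕ}

theorem lt_length_of_mem_digits (h : IsBiography M N) {x : ℕ} (hx : x ∈ digits 10 N) :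
    x < (digits 10 M).length := by
  have hlen := h.1
  have hmax := List.le_max_of_le' 0 hx le_rfl
  simp only [msdDigits, List.length_reverse] at hlen
  omega

theorem msdDigits_eq (h : IsBiography M N) :
    msdDigits M = (List.range (digits 10 M).length).map fun i => (digits 10 N).count i := by
  apply List.ext_getElem (by simp [msdDigits])
  intro i hi _
  simp only [List.getElem_map, List.getElem_range]
  rw [← h.2 i hi, List.getD_eq_getElem]

theorem mem_digits_iff (h : IsBiography M N) {x : ℕ} :
    x ∈ digits 10 M ↔ ∃ i < (digits 10 M).length, (digits 10 N).count i = x := by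
  rw [← List.mem_reverse, ← msdDigits, h.msdDigits_eq]
  simp

theorem sum_range_count (h : IsBiography M N) :
    ∑ i ∈ range (digits 10 M).length, (digits 10 N).count i = (digits 10 N).length := by
  simpa using Multiset.sum_count_eq_card (m := (digits 10 N : Multiset ℕ))
    fun x hx => mem_range.2 (h.lt_length_of_mem_digits hx)

theorem zero_mem_digits_s19 (h : IsBiography M N) (hM : 0 < M) : 0 ∈ digits 10 N := by
  have hne : digits 10 M ≠ [] := Nat.digits_ne_nil_iff_ne_zero.2 hM.ne'
  have hk : 0 < (msdDigits M).length := by simpa [msdDigits, List.length_pos_iff] using hne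
  rw [← List.count_pos_iff, ← h.2 0 hk, List.getD_eq_getElem _ _ hk]
  have := Nat.getLast_digit_ne_zero 10 hM.ne'
  rw [List.getLast_eq_getElem] at this
  simp only [msdDigits, List.getElem_reverse, Nat.sub_zero]
  omega

theorem length_sub_one_mem_digits (h : IsBiography M N) (hM : ¬ 10 ∣ M) :
    (digits 10 M).length - 1 ∈ digits 10 N := by
  have hM0 : 0 < M := Nat.pos_of_ne_zero (by rintro rfl; simp at hM)
  have hk : (digits 10 M).length - 1 < (msdDigits M).length := by
    simpa [msdDigits, List.length_pos_iff] using Nat.digits_ne_nil_iff_ne_zero.2 hM0.ne'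
  rw [← List.count_pos_iff, ← h.2 _ hk, List.getD_eq_getElem _ _ hk]
  simp only [msdDigits, List.getElem_reverse, Nat.sub_self]
  simp [Nat.digits_def' (by norm_num : 1 < 10) hM0]
  omega

theorem one_mem_digits_and_forall_mem_digits (h : IsBiography M N) (hM : ¬ 10 ∣ M)
    (hmem : (digits 10 N).length - 1 ∈ digits 10 M) :
    1 ∈ digits 10 M ∧ ∀ x ∈ digits 10 N, x = 0 ∨ x = (digits 10 M).length - 1 := by
  have hM0 : 0 < M := Nat.pos_of_ne_zero (by rintro rfl; simp at hM)
  obtain ⟨j, hj, hcount⟩ := h.mem_digits_iff.1 hmem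
  obtain ⟨hend, hinner⟩ := end_eq_one_and_inner_eq_zero_of_sum_range_eq h.sum_range_count
    (List.count_pos_iff.2 (h.zero_mem_digits_s19 hM0))
    (List.count_pos_iff.2 (h.length_sub_one_mem_digits hM)) hj hcount
  refine ⟨h.mem_digits_iff.2 ?_, fun x hx => ?_⟩
  · rcases hend with h1 | h1
    exacts [⟨0, by omega, h1⟩, ⟨_, by omega, h1⟩]
  · have hxk := h.lt_length_of_mem_digits hx
    have hx0 := List.count_pos_iff.2 hx
    by_contra! hx'
    have := hinner x (by omega) (by omega)
    omega

end IsBiography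

theorem mutuallyPraising_ten_dvd (A B : ℕ) (h : MutuallyPraising A B) :
    10 ∣ A ∨ 10 ∣ B := by
  by_contra! ⟨hA, hB⟩
  obtain ⟨hA0, hB0, -, hAB, hBA⟩ := h
  have h1A := (hAB.one_mem_digits_and_forall_mem_digits hA (hBA.length_sub_one_mem_digits hB)).1
  have hdigitsA :=
    (hBA.one_mem_digits_and_forall_mem_digits hB (hAB.length_sub_one_mem_digits hA)).2
  have hlB : (digits 10 B).length = 2 := by
    have := hdigitsA 1 h1A
    omega
  obtain ⟨i, hi, hcount⟩ := hBA.mem_digits_iff.1 (hAB.zero_mem_digits_s19 hA0)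
  rw [hlB] at hi
  interval_cases i
  · exact List.count_eq_zero.1 hcount (hBA.zero_mem_digits_s19 hB0)
  · exact List.count_eq_zero.1 hcount h1A
end
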